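/- arXiv:1009.3660 — 5 statements merged into one kernel-verified Lean document; each statement's English description precedes it below -/
import Mathlib

section
/- Let f : C_n → C_m be a map commuting with the action of Φ_p for every polynomial p ∈ ℂ[t] and with the action of Ψ_q for every polynomial q ∈ ℂ[t]. Suppose f(X,Y) = (P,Q) and P is diagonalizable. Then every eigenvalue of P is an eigenvalue of X. -/
open Matrix Polynomial

noncomputable section

/-- `n×n` complex matrices. -/
abbrev Mat (n : ℕ) := Matrix (Fin n) (Fin n) ℂ

/-- The Calogero–Moser condition: `[X,Y] + I` has rank one. -/
def IsCMPair {n : ℕ} (P : Mat n × Mat n) : Prop :=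
  (P.1 * P.2 - P.2 * P.1 + 1).rank = 1

/-- Simultaneous conjugacy of pairs of matrices. -/
def SimConj {n : ℕ} (P Q : Mat n × Mat n) : Prop :=
  ∃ A : (Mat n)ˣ, Q.1 = ↑A⁻¹ * P.1 * ↑A ∧ Q.2 = ↑A⁻¹ * P.2 * ↑A

/-- Conjugation by a unit, as a `ℂ`-algebra homomorphism. -/
def conjAlgHom {n : ℕ} (A : (Mat n)ˣ) : Mat n →ₐ[ℂ] Mat n where
  toFun X := ↑A⁻¹ * X * ↑A
  map_one' := by show (↑A⁻¹ : Mat n) * 1 * ↑A = 1; rw [mul_one, Units.inv_mul]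
  map_mul' X Y := by simp only [mul_assoc, Units.mul_inv_cancel_left]
  map_zero' := by simp only [mul_zero, zero_mul]
  map_add' X Y := by simp only [mul_add, add_mul]
  commutes' r := by
    show (↑A⁻¹ : Mat n) * algebraMap ℂ (Mat n) r * ↑A = algebraMap ℂ (Mat n) r
    rw [mul_assoc, Algebra.commutes r ((A : Mat n)), ← mul_assoc, Units.inv_mul, one_mul]

lemma conjAlgHom_apply {n : ℕ} (A : (Mat n)ˣ) (X : Mat n) :
    conjAlgHom A X = ↑A⁻¹ * X * ↑A := rfl

lemma simConj_refl {n : ℕ} (P : Mat n × Mat n) : SimConj P P :=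
  ⟨1, by rw [inv_one, Units.val_one, one_mul, mul_one],
      by rw [inv_one, Units.val_one, one_mul, mul_one]⟩

lemma simConj_symm {n : ℕ} {P Q : Mat n × Mat n} (h : SimConj P Q) : SimConj Q P := by
  obtain ⟨A, h1, h2⟩ := h
  refine ⟨A⁻¹, ?_, ?_⟩
  · rw [inv_inv, h1]
    simp only [mul_assoc, Units.mul_inv_cancel_left, Units.mul_inv, mul_one]
  · rw [inv_inv, h2]
    simp only [mul_assoc, Units.mul_inv_cancel_left, Units.mul_inv, mul_one]

lemma simConj_trans {n : ℕ} {P Q R : Mat n × Mat n} (h : SimConj P Q) (h' : SimConj Q R) :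
    SimConj P R := by
  obtain ⟨A, h1, h2⟩ := h
  obtain ⟨B, h1', h2'⟩ := h'
  refine ⟨A * B, ?_, ?_⟩
  · rw [h1', h1, _root_.mul_inv_rev, Units.val_mul, Units.val_mul]
    simp only [mul_assoc]
  · rw [h2', h2, _root_.mul_inv_rev, Units.val_mul, Units.val_mul]
    simp only [mul_assoc]

/-- The setoid of simultaneous conjugacy on Calogero–Moser pairs. -/
def CMSetoid (n : ℕ) : Setoid {P : Mat n × Mat n // IsCMPair P} where
  r P Q := SimConj P.1 Q.1
  iseqv := ⟨fun P => simConj_refl P.1, simConj_symm, simConj_trans⟩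

/-- The `n`-th Calogero–Moser space: simultaneous conjugacy classes of pairs
`(X,Y)` of `n×n` complex matrices with `rank ([X,Y] + 1) = 1`. -/
def CMSpace (n : ℕ) := Quotient (CMSetoid n)

/-- The class of a Calogero–Moser pair in the Calogero–Moser space. -/
def CMSpace.mk {n : ℕ} (P : Mat n × Mat n) (h : IsCMPair P) : CMSpace n :=
  Quotient.mk (CMSetoid n) ⟨P, h⟩

/-- The action `Φ_p (X,Y) = (X + p(Y), Y)` on pairs of matrices. -/
def phiPair {n : ℕ} (p : ℂ[X]) (P : Mat n × Mat n) : Mat n × Mat n :=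
  (P.1 + aeval P.2 p, P.2)

/-- The action `Ψ_q (X,Y) = (X, Y + q(X))` on pairs of matrices. -/
def psiPair {n : ℕ} (q : ℂ[X]) (P : Mat n × Mat n) : Mat n × Mat n :=
  (P.1, P.2 + aeval P.1 q)

lemma commute_aeval {n : ℕ} (Y : Mat n) (p : ℂ[X]) : Commute (aeval Y p) Y := by
  simpa using (Commute.all p Polynomial.X).map (aeval Y)

lemma isCMPair_phiPair {n : ℕ} (p : ℂ[X]) {P : Mat n × Mat n} (h : IsCMPair P) :
    IsCMPair (phiPair p P) := by
  have hc := (commute_aeval P.2 p).eq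
  unfold IsCMPair phiPair at *
  dsimp only
  rw [add_mul, mul_add, hc]
  convert h using 2
  abel

lemma isCMPair_psiPair {n : ℕ} (q : ℂ[X]) {P : Mat n × Mat n} (h : IsCMPair P) :
    IsCMPair (psiPair q P) := by
  have hc := (commute_aeval P.1 q).eq
  unfold IsCMPair psiPair at *
  dsimp only
  rw [add_mul, mul_add, hc]
  convert h using 2
  abel

lemma simConj_phiPair {n : ℕ} (p : ℂ[X]) {P Q : Mat n × Mat n} (h : SimConj P Q) :
    SimConj (phiPair p P) (phiPair p Q) := by
  obtain ⟨A, h1, h2⟩ := h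
  refine ⟨A, ?_, h2⟩
  have hconj : aeval ((↑A⁻¹ : Mat n) * P.2 * (↑A : Mat n)) p
      = (↑A⁻¹ : Mat n) * aeval P.2 p * (↑A : Mat n) := by
    simpa only [conjAlgHom_apply] using aeval_algHom_apply (conjAlgHom A) P.2 p
  show Q.1 + aeval Q.2 p = (↑A⁻¹ : Mat n) * (P.1 + aeval P.2 p) * (↑A : Mat n)
  rw [h1, h2, hconj, mul_add, add_mul]

lemma simConj_psiPair {n : ℕ} (q : ℂ[X]) {P Q : Mat n × Mat n} (h : SimConj P Q) :
    SimConj (psiPair q P) (psiPair q Q) := by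
  obtain ⟨A, h1, h2⟩ := h
  refine ⟨A, h1, ?_⟩
  have hconj : aeval ((↑A⁻¹ : Mat n) * P.1 * (↑A : Mat n)) q
      = (↑A⁻¹ : Mat n) * aeval P.1 q * (↑A : Mat n) := by
    simpa only [conjAlgHom_apply] using aeval_algHom_apply (conjAlgHom A) P.1 q
  show Q.2 + aeval Q.1 q = (↑A⁻¹ : Mat n) * (P.2 + aeval P.1 q) * (↑A : Mat n)
  rw [h1, h2, hconj, mul_add, add_mul]

/-- The action `Φ_p` on the Calogero–Moser space. -/
def Phi {n : ℕ} (p : ℂ[X]) : CMSpace n → CMSpace n :=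
  @Quotient.map _ _ (CMSetoid n) (CMSetoid n)
    (fun P => ⟨phiPair p P.1, isCMPair_phiPair p P.2⟩)
    (fun _ _ h => simConj_phiPair p h)

/-- The action `Ψ_q` on the Calogero–Moser space. -/
def Psi {n : ℕ} (q : ℂ[X]) : CMSpace n → CMSpace n :=
  @Quotient.map _ _ (CMSetoid n) (CMSetoid n)
    (fun P => ⟨psiPair q P.1, isCMPair_psiPair q P.2⟩)
    (fun _ _ h => simConj_psiPair q h)

/-!
If `q(X) = 0` then `Ψ_q` fixes the class of `(X, Y)`, so by equivariance it fixes the class of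
`(P, Q)`: `Q + q(P)` is conjugate to `Q`, whence `tr q(P) = 0`. Writing `P` as conjugate to
`diag(d)`, this says `∑ᵢ q(dᵢ) = 0` for every multiple `q` of `χ_X`. Taking `q = ℓ · χ_X` with `ℓ`
the Lagrange basis polynomial of the eigenvalue `μ` among the distinct `dᵢ` leaves
`#{i | dᵢ = μ} · χ_X(μ) = 0`, so `χ_X(μ) = 0`.
-/

section Diagonal

open Finset

variable {K ι : Type*} [Fintype ι]

lemma Matrix.aeval_diagonal [DecidableEq ι] [CommSemiring K] (d : ι → K) (q : K[X]) :
    aeval (diagonal d) q = diagonal fun i ↦ q.eval (d i) := by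
  rw [← diagonalAlgHom_apply (R := K), aeval_algHom_apply, diagonalAlgHom_apply]
  congr 1
  ext i
  rw [aeval_fn_apply, coe_aeval_eq_eval]

lemma Matrix.trace_aeval_diagonal [DecidableEq ι] [CommSemiring K] (d : ι → K) (q : K[X]) :
    trace (aeval (diagonal d) q) = ∑ i, q.eval (d i) := by
  rw [aeval_diagonal, trace_diagonal]

lemma Polynomial.isRoot_of_forall_dvd_sum_eval_eq_zero [Field K] [CharZero K] {p : K[X]}
    (d : ι → K) (h : ∀ q, p ∣ q → ∑ i, q.eval (d i) = 0) (i : ι) : p.IsRoot (d i) := by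
  classical
  set ℓ := Lagrange.basis (univ.image d) id (d i)
  have hℓ (j : ι) : ℓ.eval (d j) = if d j = d i then 1 else 0 := by
    split_ifs with hj
    · rw [hj]
      exact Lagrange.eval_basis_self Function.injective_id.injOn (by simp)
    · exact Lagrange.eval_basis_of_ne (v := id) (Ne.symm hj) (mem_image_of_mem d (mem_univ j))
  have hsum : ∑ j, (ℓ * p).eval (d j) = #{j | d j = d i} * p.eval (d i) := by
    simp_rw [eval_mul, hℓ, ite_mul, one_mul, zero_mul]
    rw [← sum_filter, sum_congr rfl fun j hj ↦ by rw [(mem_filter.1 hj).2], sum_const,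
      nsmul_eq_mul]
  have hcard : (#{j | d j = d i} : K) ≠ 0 :=
    Nat.cast_ne_zero.2 (card_ne_zero_of_mem (mem_filter.2 ⟨mem_univ i, rfl⟩))
  have hzero : (#{j | d j = d i} : K) * p.eval (d i) = 0 := hsum ▸ h _ (dvd_mul_left p ℓ)
  exact (mul_eq_zero.1 hzero).resolve_left hcard

end Diagonal

lemma trace_aeval_units_conj {m : ℕ} (B : (Mat m)ˣ) (M : Mat m) (q : ℂ[X]) :
    trace (aeval (↑B⁻¹ * M * ↑B) q) = trace (aeval M q) := by
  rw [← conjAlgHom_apply, aeval_algHom_apply, conjAlgHom_apply, trace_units_conj']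

lemma psi_mk_eq_self_of_aeval_eq_zero {n : ℕ} {X Y : Mat n} (h : IsCMPair (X, Y)) {q : ℂ[X]}
    (hq : aeval X q = 0) : Psi q (CMSpace.mk (X, Y) h) = CMSpace.mk (X, Y) h := by
  have hpair : psiPair q (X, Y) = (X, Y) := by simp [psiPair, hq]
  apply Quotient.sound
  change SimConj (psiPair q (X, Y)) (X, Y)
  rw [hpair]
  exact simConj_refl (X, Y)

lemma trace_aeval_eq_zero_of_psi_mk_eq_self {m : ℕ} {P Q : Mat m} (h : IsCMPair (P, Q))
    {q : ℂ[X]} (hq : Psi q (CMSpace.mk (P, Q) h) = CMSpace.mk (P, Q) h) :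
    trace (aeval P q) = 0 := by
  obtain ⟨A, -, hA⟩ : SimConj (psiPair q (P, Q)) (P, Q) := Quotient.exact hq
  change Q = ↑A⁻¹ * (Q + aeval P q) * ↑A at hA
  have htrace := congrArg trace hA
  rwa [trace_units_conj', trace_add, left_eq_add] at htrace

lemma trace_aeval_eq_zero_of_psi_equivariant {n m : ℕ} {f : CMSpace n → CMSpace m}
    (hPsi : ∀ (q : ℂ[X]) (c : CMSpace n), f (Psi q c) = Psi q (f c))
    {X Y : Mat n} {hXY : IsCMPair (X, Y)} {P Q : Mat m} {hPQ : IsCMPair (P, Q)}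
    (hf : f (CMSpace.mk (X, Y) hXY) = CMSpace.mk (P, Q) hPQ) {q : ℂ[X]} (hq : aeval X q = 0) :
    trace (aeval P q) = 0 :=
  trace_aeval_eq_zero_of_psi_mk_eq_self hPQ <| by
    rw [← hf, ← hPsi, psi_mk_eq_self_of_aeval_eq_zero hXY hq]

theorem eigenvalues_of_equivariant_image_general (n m : ℕ) (f : CMSpace n → CMSpace m)
    (hPsi : ∀ (q : ℂ[X]) (c : CMSpace n), f (Psi q c) = Psi q (f c))
    (X Y : Mat n) (hXY : IsCMPair (X, Y)) (P Q : Mat m) (hPQ : IsCMPair (P, Q))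
    (hf : f (CMSpace.mk (X, Y) hXY) = CMSpace.mk (P, Q) hPQ)
    (hdiag : ∃ (B : (Mat m)ˣ) (d : Fin m → ℂ), P = ↑B⁻¹ * Matrix.diagonal d * ↑B) :
    ∀ μ : ℂ, μ ∈ spectrum ℂ P → μ ∈ spectrum ℂ X := by
  obtain ⟨B, d, rfl⟩ := hdiag
  intro μ hμ
  rw [spectrum.units_conjugate', spectrum_diagonal] at hμ
  obtain ⟨i, rfl⟩ := hμ
  rw [mem_spectrum_iff_isRoot_charpoly]
  refine isRoot_of_forall_dvd_sum_eval_eq_zero d (fun q ⟨r, hr⟩ ↦ ?_) i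
  rw [← trace_aeval_diagonal, ← trace_aeval_units_conj B]
  exact trace_aeval_eq_zero_of_psi_equivariant hPsi hf (by simp [hr, aeval_self_charpoly])

/-- If `f : C_n → C_m` is equivariant, `f(X,Y) = (P,Q)` and `P` is diagonalizable, then
every eigenvalue of `P` is an eigenvalue of `X`. -/
theorem eigenvalues_of_equivariant_image (n m : ℕ) (f : CMSpace n → CMSpace m)
    (hPhi : ∀ (p : ℂ[X]) (c : CMSpace n), f (Phi p c) = Phi p (f c))
    (hPsi : ∀ (q : ℂ[X]) (c : CMSpace n), f (Psi q c) = Psi q (f c))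
    (X Y : Mat n) (hXY : IsCMPair (X, Y)) (P Q : Mat m) (hPQ : IsCMPair (P, Q))
    (hf : f (CMSpace.mk (X, Y) hXY) = CMSpace.mk (P, Q) hPQ)
    (hdiag : ∃ (B : (Mat m)ˣ) (d : Fin m → ℂ), P = ↑B⁻¹ * Matrix.diagonal d * ↑B) :
    ∀ μ : ℂ, μ ∈ spectrum ℂ P → μ ∈ spectrum ℂ X :=
  eigenvalues_of_equivariant_image_general n m f hPsi X Y hXY P Q hPQ hf hdiag
end
end

section
/- If n > m > 0, there is no map f : C_n → C_m commuting with the action of Φ_p for every polynomial p ∈ ℂ[t] and with the action of Ψ_q for every polynomial q ∈ ℂ[t]. -/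
open Matrix Polynomial

noncomputable section

/-!
Let `P = (X₀, Y₀) ∈ C_n` with `X₀ⁿ = Y₀ⁿ = 0`, and let `(X, Y)` represent `f P`. Since `Φ_{tⁿ p}`
and `Ψ_{tⁿ q}` fix `P`, they fix `f P`, and invariance of the trace under conjugation gives
`tr (Yⁿ p(Y)) = tr (Xⁿ q(X)) = 0` for all `p, q`. This forces `X` and `Y` to be nilpotent, so
`Xᵐ = Yᵐ = 0`.

With `c = 1/(n-1)!` the composite `Ψ_{-c (t-1)ⁿ⁻¹ tⁿ} ∘ Φ_{tⁿ} ∘ Ψ_{c tⁿ⁻¹}` sends `P` to `Φ₁ P`: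
the first step turns `Y₀` into a cyclic permutation matrix `Z`, the second adds `Zⁿ = 1` to `X₀`,
the third turns `Z` back into `Y₀`. All three polynomials vanish on `(X, Y)` because `m ≤ n - 1`,
so `Φ₁` fixes `f P`; but `Φ₁` changes `tr X` by `m ≠ 0`.
-/

open Equiv

namespace Matrix

section Nilpotent

variable {ι K : Type*} [Fintype ι] [DecidableEq ι] [Field K] [CharZero K]

theorem eq_zero_of_isIdempotentElem_of_trace_eq_zero {E : Matrix ι ι K}
    (hE : IsIdempotentElem E) (htr : E.trace = 0) : E = 0 := by
  have hE' : IsIdempotentElem (toLinAlgEquiv' E) := hE.map _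
  exact toLinAlgEquiv'.injective <| by
    rw [LinearMap.IsIdempotentElem.eq_zero_of_trace_eq_zero hE'
      (by rwa [← trace_toLin'_eq] at htr), map_zero]

theorem isNilpotent_of_forall_trace_aeval_X_pow_mul_eq_zero (A : Matrix ι ι K) (N : ℕ)
    (h : ∀ p : K[X], (aeval A (X ^ N * p)).trace = 0) : IsNilpotent A := by
  obtain ⟨g, hχ, hg⟩ := A.charpoly.exists_eq_pow_rootMultiplicity_mul_and_not_dvd
    A.charpoly_monic.ne_zero 0
  simp only [map_zero, sub_zero] at hχ hg
  set j := A.charpoly.rootMultiplicity 0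
  obtain ⟨u, v, huv⟩ : IsCoprime ((X : K[X]) ^ (N + j)) g :=
    ((irreducible_X.coprime_iff_not_dvd).mpr hg).pow_left
  have hann : aeval A (X ^ (N + j) * g) = 0 := by
    rw [pow_add, mul_assoc, ← hχ, map_mul, aeval_self_charpoly, mul_zero]
  -- `u Xᴺ⁺ʲ ≡ 0 mod Xᴺ⁺ʲ` and `≡ 1 mod g`, so it evaluates to an idempotent of trace zero.
  have he : aeval A (X ^ N * (X ^ j * u)) = 0 := by
    refine eq_zero_of_isIdempotentElem_of_trace_eq_zero ?_ (h _)
    rw [IsIdempotentElem, ← map_mul, ← sub_eq_zero, ← map_sub]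
    have : X ^ N * (X ^ j * u) * (X ^ N * (X ^ j * u)) - X ^ N * (X ^ j * u)
        = -(u * v) * (X ^ (N + j) * g) := by
      rw [pow_add]; linear_combination (X ^ N * X ^ j * u) * huv
    rw [this, map_mul, hann, mul_zero]
  refine ⟨N + j, ?_⟩
  have : (X : K[X]) ^ (N + j) =
      X ^ (N + j) * (X ^ N * (X ^ j * u)) + v * (X ^ (N + j) * g) := by
    rw [pow_add]; linear_combination (-(X : K[X]) ^ N * X ^ j) * huv
  rw [← aeval_X_pow (R := K), this, map_add, map_mul, map_mul (aeval A) v, he, hann, mul_zero,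
    mul_zero, add_zero]

end Nilpotent

theorem pow_card_eq_zero_of_isNilpotent {ι R : Type*} [Fintype ι] [DecidableEq ι] [CommRing R]
    [IsDomain R] {A : Matrix ι ι R} (hA : IsNilpotent A) : A ^ Fintype.card ι = 0 := by
  have hχ : A.charpoly = X ^ Fintype.card ι :=
    sub_eq_zero.mp (isNilpotent_charpoly_sub_pow_of_isNilpotent hA).eq_zero
  simpa [hχ] using A.aeval_self_charpoly

theorem permMatrix_pow {ι R : Type*} [DecidableEq ι] [Fintype ι] [Semiring R] (σ : Perm ι)
    (k : ℕ) : (σ ^ k).permMatrix R = σ.permMatrix R ^ k := by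
  induction k with
  | zero => simp
  | succ k ih => rw [pow_succ, permMatrix_mul, ih, pow_succ']

def weightedShift {R : Type*} [Zero R] (n : ℕ) (w : ℕ → R) : Matrix (Fin n) (Fin n) R :=
  of fun i j => if (i : ℕ) = j + 1 then w j else 0

section WeightedShift

variable {R : Type*} [CommSemiring R] {n : ℕ} (v w : ℕ → R)

theorem weightedShift_pow (k : ℕ) :
    weightedShift n w ^ k =
      of fun i j : Fin n => if (i : ℕ) = j + k then ∏ t ∈ Finset.range k, w (j + t) else 0 := by
  induction k with
  | zero => ext i j; simp [one_apply, Fin.ext_iff]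
  | succ k ih =>
    ext i j
    rw [pow_succ', ih, mul_apply]
    simp only [weightedShift, of_apply, ite_mul, zero_mul, mul_ite, mul_zero]
    split_ifs with hi
    · rw [Fintype.sum_eq_single ⟨j + k, by omega⟩ fun l hl => if_neg fun h => hl (Fin.ext h)]
      simp [hi, Finset.prod_range_succ, mul_comm, add_assoc]
    · exact Finset.sum_eq_zero fun l _ => by split_ifs <;> first | rfl | omega

theorem weightedShift_pow_self : weightedShift n w ^ n = 0 := by
  ext i j
  simp only [weightedShift_pow, of_apply, zero_apply, ite_eq_right_iff]
  omega

theorem transpose_weightedShift_mul_weightedShift :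
    (weightedShift n w)ᵀ * weightedShift n v =
      diagonal fun i : Fin n => if (i : ℕ) + 1 < n then w i * v i else 0 := by
  ext i j
  simp only [mul_apply, transpose_apply, weightedShift, of_apply, diagonal_apply, ite_mul,
    zero_mul, mul_ite, mul_zero]
  split_ifs with hij hi
  · subst hij
    rw [Fintype.sum_eq_single ⟨i + 1, hi⟩ fun l hl => if_neg fun h => hl (Fin.ext h)]
    simp
  all_goals exact Finset.sum_eq_zero fun l _ => by split_ifs <;> first | rfl | omega

theorem weightedShift_mul_transpose_weightedShift :
    weightedShift n v * (weightedShift n w)ᵀ =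
      diagonal fun i : Fin n => if 0 < (i : ℕ) then v (i - 1) * w (i - 1) else 0 := by
  ext i j
  simp only [mul_apply, transpose_apply, weightedShift, of_apply, diagonal_apply, ite_mul,
    zero_mul, mul_ite, mul_zero]
  split_ifs with hij hi
  · subst hij
    rw [Fintype.sum_eq_single ⟨i - 1, by omega⟩
      fun l hl => if_neg fun h => hl (Fin.ext (show (l : ℕ) = i - 1 by omega))]
    simp [Nat.sub_add_cancel hi]
  all_goals exact Finset.sum_eq_zero fun l _ => by split_ifs <;> first | rfl | omega

end WeightedShift

end Matrix

theorem finRotate_pow_self (n : ℕ) : finRotate n ^ n = 1 := by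
  rcases lt_or_ge n 2 with hn | hn
  · interval_cases n <;> decide
  · have h := pow_orderOf_eq_one (finRotate n)
    rwa [(isCycle_finRotate_of_le hn).orderOf, support_finRotate_of_le hn, Finset.card_univ,
      Fintype.card_fin] at h

theorem Polynomial.aeval_add_one_sub_one_pow_mul_X_pow {R A : Type*} [CommRing R] [Ring A]
    [Algebra R A] {a : A} {n : ℕ} (hn : 0 < n) (ha : a ^ n = 0) :
    aeval (a + 1) ((X - 1) ^ (n - 1) * X ^ n : R[X]) = a ^ (n - 1) := by
  obtain ⟨k, rfl⟩ := Nat.exists_eq_add_one_of_ne_zero hn.ne'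
  obtain ⟨h, hh⟩ := sub_dvd_pow_sub_pow (X : R[X]) 1 (k + 1)
  have : ((X : R[X]) - 1) ^ k * X ^ (k + 1) = (X - 1) ^ k + (X - 1) ^ (k + 1) * h := by
    rw [one_pow] at hh
    linear_combination (X - 1 : R[X]) ^ k * hh
  simp [this, ha]

section CalogeroMoser

theorem SimConj.trace_fst {n : ℕ} {P Q : Mat n × Mat n} (h : SimConj P Q) :
    Q.1.trace = P.1.trace := by
  obtain ⟨A, h1, -⟩ := h
  rw [h1, trace_units_conj']

theorem SimConj.trace_snd {n : ℕ} {P Q : Mat n × Mat n} (h : SimConj P Q) :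
    Q.2.trace = P.2.trace := by
  obtain ⟨A, -, h2⟩ := h
  rw [h2, trace_units_conj']

namespace CMSpace

variable {n : ℕ}

theorem exists_rep (c : CMSpace n) : ∃ P h, CMSpace.mk P h = c := by
  obtain ⟨⟨P, h⟩, rfl⟩ := Quotient.exists_rep c
  exact ⟨P, h, rfl⟩

theorem mk_eq_mk_of_eq {P Q : Mat n × Mat n} (hP : IsCMPair P) (hQ : IsCMPair Q) (h : P = Q) :
    CMSpace.mk P hP = CMSpace.mk Q hQ := by
  subst h; rfl

end CMSpace

variable {n : ℕ} {P : Mat n × Mat n} (hP : IsCMPair P) (p : ℂ[X])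

theorem Phi_mk : Phi p (CMSpace.mk P hP) = CMSpace.mk (phiPair p P) (isCMPair_phiPair p hP) :=
  rfl

theorem Psi_mk : Psi p (CMSpace.mk P hP) = CMSpace.mk (psiPair p P) (isCMPair_psiPair p hP) :=
  rfl

theorem Phi_mk_eq_self_of_aeval_eq_zero (hp : aeval P.2 p = 0) :
    Phi p (CMSpace.mk P hP) = CMSpace.mk P hP :=
  CMSpace.mk_eq_mk_of_eq _ _ (by simp [phiPair, hp])

theorem Psi_mk_eq_self_of_aeval_eq_zero (hp : aeval P.1 p = 0) :
    Psi p (CMSpace.mk P hP) = CMSpace.mk P hP :=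
  CMSpace.mk_eq_mk_of_eq _ _ (by simp [psiPair, hp])

variable {hP p}

theorem trace_aeval_snd_eq_zero_of_Phi_mk_eq_self
    (h : Phi p (CMSpace.mk P hP) = CMSpace.mk P hP) : (aeval P.2 p).trace = 0 := by
  have := (Quotient.exact h).trace_fst
  simpa [phiPair, trace_add] using this

theorem trace_aeval_fst_eq_zero_of_Psi_mk_eq_self
    (h : Psi p (CMSpace.mk P hP) = CMSpace.mk P hP) : (aeval P.1 p).trace = 0 := by
  have := (Quotient.exact h).trace_snd
  simpa [psiPair, trace_add] using this

theorem Phi_one_ne_self (hn : 0 < n) (c : CMSpace n) : Phi 1 c ≠ c := by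
  obtain ⟨P, hP, rfl⟩ := c.exists_rep
  intro h
  simpa [hn.ne'] using trace_aeval_snd_eq_zero_of_Phi_mk_eq_self h

end CalogeroMoser

/-- In the basis `tʲ / j!` of `ℂ[t]/(tⁿ)` these are multiplication by `t` and `d/dt`, so
`[X, Y] + 1` only sees the truncation at `tⁿ`. -/
def nilpotentPair (n : ℕ) : Mat n × Mat n :=
  (weightedShift n fun j => ((j + 1 : ℕ) : ℂ), (weightedShift n 1)ᵀ)

theorem nilpotentPair_fst_pow_self (n : ℕ) : (nilpotentPair n).1 ^ n = 0 := by
  rw [nilpotentPair, weightedShift_pow_self]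

theorem nilpotentPair_snd_pow_self (n : ℕ) : (nilpotentPair n).2 ^ n = 0 := by
  rw [nilpotentPair, ← transpose_pow, weightedShift_pow_self, transpose_zero]

theorem nilpotentPair_commutator_add_one (n : ℕ) :
    (nilpotentPair n).1 * (nilpotentPair n).2 - (nilpotentPair n).2 * (nilpotentPair n).1 + 1 =
      diagonal fun i : Fin n => if (i : ℕ) + 1 = n then (n : ℂ) else 0 := by
  rw [nilpotentPair, weightedShift_mul_transpose_weightedShift,
    transpose_weightedShift_mul_weightedShift, ← diagonal_one, diagonal_sub, diagonal_add]
  congr 1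
  ext i
  simp only [Pi.one_apply, mul_one, one_mul]
  rcases Nat.eq_zero_or_pos (i : ℕ) with h0 | h0 <;> by_cases hlast : (i : ℕ) + 1 = n
  · simp [h0, ← hlast]
  · simp [h0, show 1 < n by omega, show 1 ≠ n by omega]
  · simp [h0, Nat.sub_add_cancel h0, ← hlast]
  · simp [h0, Nat.sub_add_cancel h0, show (i : ℕ) + 1 < n by omega, hlast]

theorem isCMPair_nilpotentPair {n : ℕ} (hn : 0 < n) : IsCMPair (nilpotentPair n) := by
  rw [IsCMPair, nilpotentPair_commutator_add_one, rank_diagonal, Fintype.card_eq_one_iff]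
  refine ⟨⟨⟨n - 1, by omega⟩, by simp [Nat.sub_add_cancel hn, hn.ne']⟩, fun ⟨i, hi⟩ => ?_⟩
  have hlast : (i : ℕ) + 1 = n := by
    by_contra h
    simp [h] at hi
  exact Subtype.ext (Fin.ext (show (i : ℕ) = n - 1 by omega))

theorem nilpotentPair_snd_add_smul_fst_pow {n : ℕ} (hn : 0 < n) :
    (nilpotentPair n).2 + ((n - 1).factorial : ℂ)⁻¹ • (nilpotentPair n).1 ^ (n - 1) =
      (finRotate n).permMatrix ℂ := by
  obtain ⟨n, rfl⟩ := Nat.exists_eq_add_one_of_ne_zero hn.ne'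
  rw [nilpotentPair, weightedShift_pow]
  ext i j
  simp only [Matrix.add_apply, transpose_apply, weightedShift, of_apply, Matrix.smul_apply,
    PEquiv.toMatrix_apply, toPEquiv_apply, Option.mem_def, Option.some.injEq, Fin.ext_iff,
    coe_finRotate, Pi.one_apply, add_tsub_cancel_right, smul_eq_mul, Fin.val_last]
  by_cases hi : (i : ℕ) = n
  · rw [if_pos hi, if_neg (by omega : (j : ℕ) ≠ i + 1), zero_add]
    by_cases hj : (j : ℕ) = 0
    · have hprod : ∏ t ∈ Finset.range n, ((((j : ℕ) + t + 1 : ℕ)) : ℂ) = n.factorial := by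
        simp [hj, ← Finset.prod_range_add_one_eq_factorial]
      rw [if_pos (by omega), if_pos hj.symm, hprod,
        inv_mul_cancel₀ (Nat.cast_ne_zero.mpr n.factorial_ne_zero)]
    · rw [if_neg (by omega), if_neg (Ne.symm hj), mul_zero]
  · rw [if_neg hi, if_neg (by omega : (i : ℕ) ≠ j + n), mul_zero, add_zero]
    simp only [eq_comm]

def nilpotentPoint {n : ℕ} (hn : 0 < n) : CMSpace n :=
  CMSpace.mk (nilpotentPair n) (isCMPair_nilpotentPair hn)

def cyclicWord (n : ℕ) {k : ℕ} : CMSpace k → CMSpace k :=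
  let c : ℂ := ((n - 1).factorial : ℂ)⁻¹
  Psi (-c • ((X - 1) ^ (n - 1) * X ^ n)) ∘ Phi (X ^ n) ∘ Psi (c • X ^ (n - 1))

theorem cyclicWord_mk_of_pow_eq_zero {n k : ℕ} {P : Mat k × Mat k} (hP : IsCMPair P)
    (h1 : P.1 ^ (n - 1) = 0) (h2 : P.2 ^ n = 0) :
    cyclicWord n (CMSpace.mk P hP) = CMSpace.mk P hP := by
  have h1' : P.1 ^ n = 0 := pow_eq_zero_of_le (Nat.sub_le n 1) h1
  simp only [cyclicWord, Function.comp_apply]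
  rw [Psi_mk_eq_self_of_aeval_eq_zero _ _ (by simp [h1]),
    Phi_mk_eq_self_of_aeval_eq_zero _ _ (by simp [h2]),
    Psi_mk_eq_self_of_aeval_eq_zero _ _ (by simp [h1'])]

theorem cyclicWord_nilpotentPoint {n : ℕ} (hn : 0 < n) :
    cyclicWord n (nilpotentPoint hn) = Phi 1 (nilpotentPoint hn) := by
  set c : ℂ := ((n - 1).factorial : ℂ)⁻¹
  set Z := (finRotate n).permMatrix ℂ
  have hZ : (nilpotentPair n).2 + c • (nilpotentPair n).1 ^ (n - 1) = Z :=
    nilpotentPair_snd_add_smul_fst_pow hn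
  have h₁ : psiPair (c • X ^ (n - 1)) (nilpotentPair n) = ((nilpotentPair n).1, Z) := by
    simp [psiPair, hZ]
  have h₂ : phiPair (X ^ n) ((nilpotentPair n).1, Z) = ((nilpotentPair n).1 + 1, Z) := by
    simp [phiPair, Z, ← permMatrix_pow, finRotate_pow_self]
  have h₃ : psiPair (-c • ((X - 1) ^ (n - 1) * X ^ n)) ((nilpotentPair n).1 + 1, Z) =
      phiPair 1 (nilpotentPair n) := by
    rw [psiPair, map_smul, aeval_add_one_sub_one_pow_mul_X_pow hn (nilpotentPair_fst_pow_self n),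
      ← hZ, neg_smul, add_neg_cancel_right]
    simp [phiPair]
  simp only [cyclicWord, nilpotentPoint, Function.comp_apply, Psi_mk, Phi_mk]
  exact CMSpace.mk_eq_mk_of_eq _ _ (by rw [h₁, h₂, h₃])

theorem snd_pow_eq_zero_of_forall_Phi_X_pow_mul_mk_eq_self {m : ℕ} {Q : Mat m × Mat m}
    {hQ : IsCMPair Q} (N : ℕ)
    (h : ∀ p : ℂ[X], Phi (X ^ N * p) (CMSpace.mk Q hQ) = CMSpace.mk Q hQ) : Q.2 ^ m = 0 := by
  simpa using pow_card_eq_zero_of_isNilpotent <|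
    isNilpotent_of_forall_trace_aeval_X_pow_mul_eq_zero Q.2 N fun p =>
      trace_aeval_snd_eq_zero_of_Phi_mk_eq_self (h p)

theorem fst_pow_eq_zero_of_forall_Psi_X_pow_mul_mk_eq_self {m : ℕ} {Q : Mat m × Mat m}
    {hQ : IsCMPair Q} (N : ℕ)
    (h : ∀ q : ℂ[X], Psi (X ^ N * q) (CMSpace.mk Q hQ) = CMSpace.mk Q hQ) : Q.1 ^ m = 0 := by
  simpa using pow_card_eq_zero_of_isNilpotent <|
    isNilpotent_of_forall_trace_aeval_X_pow_mul_eq_zero Q.1 N fun q =>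
      trace_aeval_fst_eq_zero_of_Psi_mk_eq_self (h q)

def CMSpace.IsEquivariant {n m : ℕ} (f : CMSpace n → CMSpace m) : Prop :=
  (∀ (p : ℂ[X]) (c : CMSpace n), f (Phi p c) = Phi p (f c)) ∧
    (∀ (q : ℂ[X]) (c : CMSpace n), f (Psi q c) = Psi q (f c))

namespace CMSpace.IsEquivariant

variable {n m : ℕ} {f : CMSpace n → CMSpace m}

theorem map_cyclicWord (hf : IsEquivariant f) (N : ℕ) (c : CMSpace n) :
    f (cyclicWord N c) = cyclicWord N (f c) := by
  simp only [cyclicWord, Function.comp_apply, hf.1, hf.2]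

theorem snd_pow_eq_zero (hf : IsEquivariant f) {P : Mat n × Mat n} {hP : IsCMPair P}
    {Q : Mat m × Mat m} {hQ : IsCMPair Q} (hfP : f (CMSpace.mk P hP) = CMSpace.mk Q hQ)
    (hP₂ : P.2 ^ n = 0) : Q.2 ^ m = 0 :=
  snd_pow_eq_zero_of_forall_Phi_X_pow_mul_mk_eq_self n fun p => by
    rw [← hfP, ← hf.1, Phi_mk_eq_self_of_aeval_eq_zero _ _ (by simp [hP₂])]

theorem fst_pow_eq_zero (hf : IsEquivariant f) {P : Mat n × Mat n} {hP : IsCMPair P}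
    {Q : Mat m × Mat m} {hQ : IsCMPair Q} (hfP : f (CMSpace.mk P hP) = CMSpace.mk Q hQ)
    (hP₁ : P.1 ^ n = 0) : Q.1 ^ m = 0 :=
  fst_pow_eq_zero_of_forall_Psi_X_pow_mul_mk_eq_self n fun q => by
    rw [← hfP, ← hf.2, Psi_mk_eq_self_of_aeval_eq_zero _ _ (by simp [hP₁])]

end CMSpace.IsEquivariant

/-- If `n > m > 0` there is no map `C_n → C_m` commuting with all `Φ_p` and `Ψ_q`. -/
theorem no_equivariant_map_CM_of_gt (n m : ℕ) (hm : 0 < m) (hnm : m < n) :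
    ¬ ∃ f : CMSpace n → CMSpace m,
      (∀ (p : ℂ[X]) (c : CMSpace n), f (Phi p c) = Phi p (f c)) ∧
      (∀ (q : ℂ[X]) (c : CMSpace n), f (Psi q c) = Psi q (f c)) := by
  rintro ⟨f, hf : CMSpace.IsEquivariant f⟩
  have hn : 0 < n := hm.trans hnm
  obtain ⟨Q, hQ, hfP⟩ := (f (nilpotentPoint hn)).exists_rep
  have hQ₁ : Q.1 ^ m = 0 := hf.fst_pow_eq_zero hfP.symm (nilpotentPair_fst_pow_self n)
  have hQ₂ : Q.2 ^ m = 0 := hf.snd_pow_eq_zero hfP.symm (nilpotentPair_snd_pow_self n)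
  have hfix : cyclicWord n (f (nilpotentPoint hn)) = f (nilpotentPoint hn) := by
    rw [← hfP]
    exact cyclicWord_mk_of_pow_eq_zero hQ (pow_eq_zero_of_le (by omega) hQ₁)
      (pow_eq_zero_of_le hnm.le hQ₂)
  apply Phi_one_ne_self hm (f (nilpotentPoint hn))
  rw [← hf.1, ← cyclicWord_nilpotentPoint hn, hf.map_cyclicWord, hfix]

end
end

section
/- Let f : C_n → C_m be a map commuting with the action of Φ_p for every polynomial p ∈ ℂ[t], with the action of Ψ_q for every polynomial q ∈ ℂ[t], and with the scaling action R_λ for every λ ∈ ℂ^×. Write f(X_0, Y_0) = (P,Q), where X_0 is the n×n matrix with subdiagonal entries 1, 2, …, n−1 and Y_0 is the n×n matrix with superdiagonal entries all 1. Then P and Q are nilpotent. -/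
open Matrix Polynomial

noncomputable section

-- matrices block
/-- The subdiagonal matrix `X(a)` with `(i+1,i)` entry `a i` (1-indexed). -/
def subd (n : ℕ) (a : ℕ → ℂ) : Mat n :=
  Matrix.of fun i j => if (i : ℕ) = (j : ℕ) + 1 then a (i : ℕ) else 0

/-- The matrix `X₀` with subdiagonal entries `1, 2, …, n-1`. -/
def X0 (n : ℕ) : Mat n := subd n (fun i => (i : ℂ))

/-- The matrix `Y₀` with superdiagonal entries all `1`. -/
def Y0 (n : ℕ) : Mat n :=
  Matrix.of fun i j => if (j : ℕ) = (i : ℕ) + 1 then 1 else 0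

/-- The vector `a(r) = (1, 2, …, r-1, -(n-r), …, -2, -1)` (1-indexed entries `1,…,n-1`). -/
def avec (n r : ℕ) : ℕ → ℂ := fun i => if i < r then (i : ℂ) else (i : ℂ) - n

-- scaling block
/-- The scaling action `R_λ(X,Y) = (λ⁻¹ X, λ Y)` on pairs of matrices. -/
def scalePair {n : ℕ} (u : ℂˣ) (P : Mat n × Mat n) : Mat n × Mat n :=
  (((u⁻¹ : ℂˣ) : ℂ) • P.1, (u : ℂ) • P.2)

lemma isCMPair_scalePair {n : ℕ} (u : ℂˣ) {P : Mat n × Mat n} (h : IsCMPair P) :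
    IsCMPair (scalePair u P) := by
  have h1 : ((u⁻¹ : ℂˣ) : ℂ) * (u : ℂ) = 1 := Units.inv_mul u
  have h2 : (u : ℂ) * ((u⁻¹ : ℂˣ) : ℂ) = 1 := Units.mul_inv u
  unfold IsCMPair scalePair at *
  dsimp only
  rw [smul_mul_smul_comm, smul_mul_smul_comm, h1, h2, one_smul, one_smul]
  exact h

lemma simConj_scalePair {n : ℕ} (u : ℂˣ) {P Q : Mat n × Mat n} (h : SimConj P Q) :
    SimConj (scalePair u P) (scalePair u Q) := by
  obtain ⟨A, h1, h2⟩ := h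
  exact ⟨A, by rw [scalePair, scalePair, h1, mul_smul_comm, smul_mul_assoc],
            by rw [scalePair, scalePair, h2, mul_smul_comm, smul_mul_assoc]⟩

/-- The scaling action `R_λ` on the Calogero–Moser space. -/
def ScaleCM {n : ℕ} (u : ℂˣ) : CMSpace n → CMSpace n :=
  @Quotient.map _ _ (CMSetoid n) (CMSetoid n)
    (fun P => ⟨scalePair u P.1, isCMPair_scalePair u P.2⟩)
    (fun _ _ h => simConj_scalePair u h)

/-!
The base point `(X₀, Y₀)` is fixed by every `R_λ`: conjugation by `diag(1, λ, …, λ^{n-1})`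
multiplies the subdiagonal by `λ⁻¹` and the superdiagonal by `λ`. By equivariance `(P, Q)` is then a
fixed point too, so `P` is conjugate to `c • P` for every `c ≠ 0` (and likewise `Q`). The
characteristic polynomial `χ` of such a matrix satisfies `χ(c) = cᵐ χ(1)` for all `c ≠ 0`, so
`χ = tᵐ` and the matrix is nilpotent by Cayley–Hamilton.
-/

namespace Matrix

variable {ι K : Type*} [Fintype ι] [DecidableEq ι] [Field K]

theorem eval_charpoly_smul (M : Matrix ι ι K) (c z : K) :
    (c • M).charpoly.eval (c * z) = c ^ Fintype.card ι * M.charpoly.eval z := by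
  rw [eval_charpoly, eval_charpoly, ← det_smul, smul_sub, scalar_apply, scalar_apply,
    ← diagonal_smul]
  rfl

theorem charpoly_eq_X_pow_of_charpoly_smul_eq [Infinite K] (M : Matrix ι ι K)
    (h : ∀ c : K, c ≠ 0 → (c • M).charpoly = M.charpoly) :
    M.charpoly = X ^ Fintype.card ι := by
  set p := M.charpoly
  have homogeneous : ∀ c : K, c ≠ 0 → p.eval c = c ^ Fintype.card ι * p.eval 1 := fun c hc => by
    simpa [h c hc] using eval_charpoly_smul M c 1
  have hp : p = C (p.eval 1) * X ^ Fintype.card ι := by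
    rw [← sub_eq_zero]
    refine eq_zero_of_infinite_isRoot _ ((Set.finite_singleton 0).infinite_compl.mono fun c hc => ?_)
    simp only [Set.mem_ofPred_eq, IsRoot, eval_sub, eval_mul, eval_C, eval_pow, eval_X]
    rw [homogeneous c hc, mul_comm, sub_self]
  have hlead : p.leadingCoeff = 1 := (charpoly_monic M).leadingCoeff
  rw [hp, leadingCoeff_C_mul_X_pow] at hlead
  rw [hp, hlead, C_1, one_mul]

theorem isNilpotent_of_charpoly_smul_eq [Infinite K] (M : Matrix ι ι K)
    (h : ∀ c : K, c ≠ 0 → (c • M).charpoly = M.charpoly) : IsNilpotent M :=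
  ⟨Fintype.card ι, by simpa [charpoly_eq_X_pow_of_charpoly_smul_eq M h] using aeval_self_charpoly M⟩

end Matrix

def powDiagonal (n : ℕ) (u : ℂˣ) : (Mat n)ˣ where
  val := diagonal fun i => (u : ℂ) ^ (i : ℕ)
  inv := diagonal fun i => ((u⁻¹ : ℂˣ) : ℂ) ^ (i : ℕ)
  val_inv := by simp [diagonal_mul_diagonal]
  inv_val := by simp [diagonal_mul_diagonal]

theorem powDiagonal_conj_apply {n : ℕ} (u : ℂˣ) (M : Mat n) (i j : Fin n) :
    (↑(powDiagonal n u)⁻¹ * M * ↑(powDiagonal n u) : Mat n) i j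
      = (u : ℂ)⁻¹ ^ (i : ℕ) * M i j * (u : ℂ) ^ (j : ℕ) := by
  simp [powDiagonal, diagonal_mul, mul_diagonal]

theorem simConj_scalePair_X0_Y0 (n : ℕ) (u : ℂˣ) :
    SimConj (X0 n, Y0 n) (scalePair u (X0 n, Y0 n)) := by
  refine ⟨powDiagonal n u, ?_, ?_⟩ <;> ext i j <;>
    simp only [scalePair, Matrix.smul_apply, smul_eq_mul, Units.val_inv_eq_inv_val,
      powDiagonal_conj_apply, X0, subd, Y0, of_apply]
  all_goals
    split_ifs with h
    · rw [h, pow_succ, inv_pow]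
      field_simp
    · simp

theorem SimConj.charpoly_fst_eq {n : ℕ} {P Q : Mat n × Mat n} (h : SimConj P Q) :
    Q.1.charpoly = P.1.charpoly := by
  obtain ⟨A, h1, -⟩ := h
  rw [h1, Matrix.coe_units_inv, charpoly_units_conj']

theorem SimConj.charpoly_snd_eq {n : ℕ} {P Q : Mat n × Mat n} (h : SimConj P Q) :
    Q.2.charpoly = P.2.charpoly := by
  obtain ⟨A, -, h2⟩ := h
  rw [h2, Matrix.coe_units_inv, charpoly_units_conj']

theorem CMSpace.mk_eq_mk_iff {n : ℕ} {P Q : Mat n × Mat n} (hP : IsCMPair P) (hQ : IsCMPair Q) :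
    CMSpace.mk P hP = CMSpace.mk Q hQ ↔ SimConj P Q :=
  Quotient.eq (r := CMSetoid n)

theorem scaleCM_mk {n : ℕ} (u : ℂˣ) {P : Mat n × Mat n} (h : IsCMPair P) :
    ScaleCM u (CMSpace.mk P h) = CMSpace.mk (scalePair u P) (isCMPair_scalePair u h) :=
  rfl

theorem scaleCM_mk_X0_Y0 {n : ℕ} (u : ℂˣ) (h0 : IsCMPair (X0 n, Y0 n)) :
    ScaleCM u (CMSpace.mk (X0 n, Y0 n) h0) = CMSpace.mk (X0 n, Y0 n) h0 := by
  rw [scaleCM_mk, CMSpace.mk_eq_mk_iff]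
  exact simConj_symm (simConj_scalePair_X0_Y0 n u)

theorem isNilpotent_of_forall_scaleCM_mk_eq {m : ℕ} {P Q : Mat m} (hPQ : IsCMPair (P, Q))
    (hfix : ∀ u : ℂˣ, ScaleCM u (CMSpace.mk (P, Q) hPQ) = CMSpace.mk (P, Q) hPQ) :
    IsNilpotent P ∧ IsNilpotent Q := by
  have hconj (u : ℂˣ) : SimConj (P, Q) (scalePair u (P, Q)) := by
    rw [← CMSpace.mk_eq_mk_iff hPQ (isCMPair_scalePair u hPQ), ← scaleCM_mk u hPQ, hfix]
  constructor <;> refine isNilpotent_of_charpoly_smul_eq _ fun c hc => ?_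
  · simpa [scalePair] using (hconj (Units.mk0 c hc)⁻¹).charpoly_fst_eq
  · exact (hconj (Units.mk0 c hc)).charpoly_snd_eq

theorem image_of_basepoint_nilpotent_general (n m : ℕ) (f : CMSpace n → CMSpace m)
    (hScale : ∀ (u : ℂˣ) (c : CMSpace n), f (ScaleCM u c) = ScaleCM u (f c))
    (h0 : IsCMPair (X0 n, Y0 n)) (P Q : Mat m) (hPQ : IsCMPair (P, Q))
    (hf : f (CMSpace.mk (X0 n, Y0 n) h0) = CMSpace.mk (P, Q) hPQ) :
    IsNilpotent P ∧ IsNilpotent Q :=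
  isNilpotent_of_forall_scaleCM_mk_eq hPQ fun u => by
    rw [← hf, ← hScale, scaleCM_mk_X0_Y0]

/-- If `f : C_n → C_m` commutes with all `Φ_p`, `Ψ_q` and all scalings `R_λ`, and
`f(X₀, Y₀) = (P, Q)`, then `P` and `Q` are nilpotent. -/
theorem image_of_basepoint_nilpotent (n m : ℕ) (f : CMSpace n → CMSpace m)
    (hPhi : ∀ (p : ℂ[X]) (c : CMSpace n), f (Phi p c) = Phi p (f c))
    (hPsi : ∀ (q : ℂ[X]) (c : CMSpace n), f (Psi q c) = Psi q (f c))
    (hScale : ∀ (u : ℂˣ) (c : CMSpace n), f (ScaleCM u c) = ScaleCM u (f c))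
    (h0 : IsCMPair (X0 n, Y0 n)) (P Q : Mat m) (hPQ : IsCMPair (P, Q))
    (hf : f (CMSpace.mk (X0 n, Y0 n) h0) = CMSpace.mk (P, Q) hPQ) :
    IsNilpotent P ∧ IsNilpotent Q :=
  image_of_basepoint_nilpotent_general n m f hScale h0 P Q hPQ hf

end
end

section
/- Let n ≥ 3, let a = (a_1, …, a_{n−1}) ∈ ℂ^{n−1}, let X(a) be the n×n matrix with (i+1,i)-entry a_i for i = 1,…,n−1 and all other entries 0, and let Y_0 be the n×n matrix with (i,i+1)-entry 1 for i = 1,…,n−1 and all other entries 0. Then det(tI − X(a) − Y_0^{n−2}) = t^n − (a_1 a_2 ⋯ a_{n−2} + a_2 a_3 ⋯ a_{n−1}) t. -/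
open Matrix Polynomial

noncomputable section

/-!
Write `Y₀^(n-2) = U V`, where `U` and `V` are the `n × 2` and `2 × n` matrices selecting the first
two coordinates and the last two coordinates. Work with the reversed characteristic polynomial
`det (1 - t M)`: the part `1 - t X(a)` is unipotent lower triangular, with the explicit inverse
`G = ∑ₖ tᵏ X(a)ᵏ` over `ℂ[t]`, so the Weinstein–Aronszajn identity reduces
`det (1 - t X(a) - t U V)` to the `2 × 2` determinant `det (1 - t V G U)`. Its two quadratic
terms are both `a₁ ⋯ a_{n-1} · a₂ ⋯ a_{n-2} · t^(2n-2)` and cancel, leaving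
`1 - (a₁ ⋯ a_{n-2} + a₂ ⋯ a_{n-1}) t^(n-1)`; reversing gives the claim.
-/

open Finset

namespace Matrix

variable {R : Type*} [CommRing R] {m k : Type*} [Fintype m] [DecidableEq m] [Fintype k]
  [DecidableEq k]

theorem det_sub_mul_of_mul_eq_one {A G : Matrix m m R} (h : A * G = 1) (U : Matrix m k R)
    (V : Matrix k m R) : det (A - U * V) = det A * det (1 - V * G * U) := by
  have : A - U * V = A * (1 - G * U * V) := by
    rw [Matrix.mul_sub, Matrix.mul_one, ← Matrix.mul_assoc, ← Matrix.mul_assoc, h, Matrix.one_mul]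
  rw [this, det_mul, det_one_sub_mul_comm, Matrix.mul_assoc]

theorem charpoly_eq_reflect_charpolyRev [Nontrivial R] (M : Matrix m m R) :
    M.charpoly = reflect (Fintype.card m) M.charpolyRev := by
  rw [← reverse_charpoly, reverse, charpoly_natDegree_eq_dim, reflect_reflect]

theorem one_submatrix_mul_mul_one_submatrix {l o : Type*} (f : l → m) (g : o → m)
    (M : Matrix m m R) :
    (1 : Matrix m m R).submatrix f id * M * (1 : Matrix m m R).submatrix id g =
      M.submatrix f g := by
  ext i j
  simp [mul_apply, one_apply]

end Matrix

theorem Fin.sum_ite_val_eq {M : Type*} [AddCommMonoid M] {n : ℕ} (c : ℕ) (f : Fin n → M) :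
    ∑ l : Fin n, (if (l : ℕ) = c then f l else 0) = if h : c < n then f ⟨c, h⟩ else 0 := by
  split_ifs with h
  · rw [Finset.sum_eq_single ⟨c, h⟩ (fun l _ hl => if_neg (fun hc => hl (Fin.ext hc)))
      (fun h' => absurd (mem_univ _) h'), if_pos rfl]
  · exact Finset.sum_eq_zero fun l _ => if_neg fun (hc : (l : ℕ) = c) => h (hc ▸ l.isLt)

lemma Y0_pow_apply (n k : ℕ) (i j : Fin n) :
    (Y0 n ^ k) i j = if (j : ℕ) = i + k then 1 else 0 := by
  induction k generalizing j with
  | zero => simp [one_apply, Fin.ext_iff, eq_comm]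
  | succ k ih =>
    simp only [pow_succ, mul_apply, ih, ite_mul, one_mul, zero_mul, Fin.sum_ite_val_eq]
    split_ifs <;> simp_all [Y0] <;> omega

lemma Y0_pow_eq_mul (k r : ℕ) :
    Y0 (k + r) ^ k = (1 : Mat (k + r)).submatrix id (Fin.castLE (Nat.le_add_left r k)) *
      (1 : Mat (k + r)).submatrix (Fin.natAdd k) id := by
  ext i j
  simp only [Y0_pow_apply, mul_apply, submatrix_apply, id, one_apply, ite_mul, one_mul, zero_mul,
    Fin.ext_iff, Fin.val_castLE, Fin.val_natAdd, @eq_comm _ (i : ℕ), Fin.sum_ite_val_eq]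
  have := i.isLt
  have := j.isLt
  split_ifs <;> first | rfl | omega

lemma det_one_sub_smul_subd (n : ℕ) (a : ℕ → ℂ) :
    det (1 - (X : ℂ[X]) • (subd n a).map C) = 1 := by
  rw [det_of_isLowerTriangular]
  · simp [subd]
  · intro i j (hij : i < j)
    simp [subd, one_apply_ne hij.ne, show (i : ℕ) ≠ j + 1 by omega]

/-- `∑ₖ tᵏ X(a)ᵏ`, written out entrywise. -/
def subdResolvent (n : ℕ) (a : ℕ → ℂ) : Matrix (Fin n) (Fin n) ℂ[X] :=
  of fun i j => if j ≤ i then C (∏ l ∈ Ioc (j : ℕ) i, a l) * X ^ ((i : ℕ) - j) else 0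

lemma subdResolvent_apply (n : ℕ) (a : ℕ → ℂ) (i j : Fin n) :
    subdResolvent n a i j =
      if j ≤ i then C (∏ l ∈ Ioc (j : ℕ) i, a l) * X ^ ((i : ℕ) - j) else 0 := rfl

lemma subdResolvent_mul (n : ℕ) (a : ℕ → ℂ) :
    subdResolvent n a * (1 - (X : ℂ[X]) • (subd n a).map C) = 1 := by
  rw [Matrix.mul_sub, Matrix.mul_one, Matrix.mul_smul]
  ext i j : 1
  simp only [Matrix.sub_apply, Matrix.smul_apply, mul_apply, map_apply, subd, of_apply,
    apply_ite C, map_zero, mul_ite, mul_zero, Fin.sum_ite_val_eq]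
  rcases lt_trichotomy (j : ℕ) i with hji | hji | hji
  · have hprod : ∏ l ∈ Ioc (j : ℕ) i, a l = a (j + 1) * ∏ l ∈ Ioc ((j : ℕ) + 1) i, a l := by
      rw [← insert_Ioc_add_one_left_eq_Ioc hji, prod_insert left_notMem_Ioc]
    have hpow : (i : ℕ) - j = (i - (j + 1)) + 1 := by omega
    simp only [subdResolvent_apply, Fin.le_def, dif_pos (show (j : ℕ) + 1 < n by omega),
      if_pos hji.le, if_pos (show (j : ℕ) + 1 ≤ i by omega), one_apply_ne (Fin.ne_of_gt hji),
      hprod, hpow, pow_succ, map_mul, smul_eq_mul]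
    ring
  · obtain rfl : i = j := Fin.ext hji.symm
    simp [subdResolvent_apply, Fin.le_def]
  · simp [subdResolvent_apply, Fin.le_def, not_le.mpr hji, one_apply_ne (Fin.ne_of_lt hji),
      show ¬ (j : ℕ) + 1 ≤ i by omega]

lemma charpolyRev_subd_add_Y0_pow (k : ℕ) (hk : 1 ≤ k) (a : ℕ → ℂ) :
    (subd (k + 2) a + Y0 (k + 2) ^ k).charpolyRev =
      1 - C (∏ i ∈ Ioc 0 k, a i + ∏ i ∈ Ioc 1 (k + 1), a i) * X ^ (k + 1) := by
  set U : Matrix (Fin (k + 2)) (Fin 2) ℂ[X] :=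
    (1 : Matrix (Fin (k + 2)) (Fin (k + 2)) ℂ[X]).submatrix id (Fin.castLE (by omega))
  set V : Matrix (Fin 2) (Fin (k + 2)) ℂ[X] :=
    (1 : Matrix (Fin (k + 2)) (Fin (k + 2)) ℂ[X]).submatrix (Fin.natAdd k) id
  have hmap : (subd (k + 2) a + Y0 (k + 2) ^ k).map C = (subd (k + 2) a).map C + U * V := by
    rw [Matrix.map_add _ (map_add C), Y0_pow_eq_mul, Matrix.map_mul (f := C), ← submatrix_map,
      ← submatrix_map, Matrix.map_one _ C.map_zero C.map_one]
  have hres := mul_eq_one_comm.mp (subdResolvent_mul (k + 2) a)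
  rw [charpolyRev, hmap, smul_add, ← sub_sub, ← Matrix.smul_mul, det_sub_mul_of_mul_eq_one hres,
    det_one_sub_smul_subd, one_mul, Matrix.mul_smul, one_submatrix_mul_mul_one_submatrix,
    det_fin_two]
  have hsplit : ∀ i, 1 ≤ i → ∏ l ∈ Ioc 0 i, a l = a 1 * ∏ l ∈ Ioc 1 i, a l := fun i hi => by
    rw [← insert_Ioc_add_one_left_eq_Ioc hi, prod_insert left_notMem_Ioc, zero_add]
  obtain ⟨j, rfl⟩ : ∃ j, k = j + 1 := ⟨k - 1, by omega⟩
  simp [subdResolvent_apply, Fin.le_def, -map_prod, hsplit (j + 1) (by omega),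
    hsplit (j + 2) (by omega)]
  ring

/-- `det(tI - X(a) - Y₀^{n-2}) = tⁿ - (a₁ ⋯ a_{n-2} + a₂ ⋯ a_{n-1}) t` for `n ≥ 3`. -/
theorem charpoly_subd_add_pow_pred_pred (n : ℕ) (hn : 3 ≤ n) (a : ℕ → ℂ) :
    (subd n a + Y0 n ^ (n - 2)).charpoly =
      Polynomial.X ^ n -
        Polynomial.C (∏ i ∈ Finset.Icc 1 (n - 2), a i + ∏ i ∈ Finset.Icc 2 (n - 1), a i) *
          Polynomial.X := by
  obtain ⟨k, rfl⟩ : ∃ k, n = k + 2 := ⟨n - 2, by omega⟩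
  rw [Nat.add_sub_cancel, show k + 2 - 1 = k + 1 by omega, charpoly_eq_reflect_charpolyRev,
    Fintype.card_fin, charpolyRev_subd_add_Y0_pow k (by omega), reflect_sub, reflect_one,
    reflect_C_mul_X_pow, revAt_le (by omega), show k + 2 - (k + 1) = 1 by omega, pow_one,
    ← Icc_add_one_left_eq_Ioc, ← Icc_add_one_left_eq_Ioc, zero_add, one_add_one_eq_two]

end
end

section
/- Let n ≥ 3 be odd, set α = (n−1)! + (n−2)! and χ(t) = t^n − αt, let X_1 = X(a(1)) where a(1) = (−(n−1), −(n−2), …, −1), and let Y_0 be the n×n matrix with superdiagonal entries all 1. Then χ(X_1 + Y_0^{n−2}) = −2α(X_1 + Y_0^{n−2}), and the matrix Y_0 − 2α(X_1 + Y_0^{n−2}) is not nilpotent; consequently the transformation Φ_{−p} ∘ Ψ_χ ∘ Φ_p with p(t) = t^{n−2} does not fix the conjugacy class of (X_1, Y_0). -/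
open Matrix Polynomial

noncomputable section

/-!
Write `M = X₁ + Y₀^{n-2}` (`Mp n` below) and `e_m` for the standard basis. `M` permutes the vectors
`e_{n-1} - e_0, e_1, …, e_{n-2}` cyclically up to the weights `n, 2 - n, 3 - n, …, -1`, so
`M^{n-1}` acts on their span as the product of the weights, `n·(-1)^{n-2}·(n-2)! = -α` for odd
`n`. Every column of `M` lies in that span, hence `M^n = -αM` and `χ(M) = -2αM`. The second
coordinate of `Φ_{-p} Ψ_χ Φ_p (X₁, Y₀)` is then `N = Y₀ - sM` with `s = 2α`, and
`tr N² = s(1 - s[n = 3])·n(n-1) ≠ 0`, so `N` is not nilpotent and cannot be conjugate to `Y₀`.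
-/

theorem Function.Periodic.prod_range_add {M : Type*} [CommMonoid M] {w : ℕ → M} {m : ℕ}
    (hw : Function.Periodic w m) (k : ℕ) :
    ∏ i ∈ Finset.range m, w (k + i) = ∏ i ∈ Finset.range m, w i := by
  induction k with
  | zero => simp
  | succ k ih =>
    rw [← ih]
    cases m with
    | zero => simp
    | succ m =>
      rw [Finset.prod_range_succ, Finset.prod_range_succ', add_zero,
        show k + 1 + m = k + (m + 1) by omega, hw]
      simp only [add_assoc, add_comm 1]

namespace Matrix

variable {ι R : Type*} [Fintype ι] [DecidableEq ι] [CommSemiring R]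

theorem pow_mulVec_of_mulVec_eq_smul (A : Matrix ι ι R) {u : ℕ → ι → R} {w : ℕ → R}
    (hA : ∀ k, A *ᵥ u k = w k • u (k + 1)) (j k : ℕ) :
    (A ^ j) *ᵥ u k = (∏ i ∈ Finset.range j, w (k + i)) • u (k + j) := by
  induction j generalizing k with
  | zero => simp
  | succ j ih =>
    rw [pow_succ, ← mulVec_mulVec, hA, mulVec_smul, ih, smul_smul, Finset.prod_range_succ']
    simp only [add_zero, add_assoc, add_comm 1, mul_comm]

theorem pow_period_mulVec (A : Matrix ι ι R) {m : ℕ} {u : ℕ → ι → R} {w : ℕ → R}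
    (hu : Function.Periodic u m) (hw : Function.Periodic w m)
    (hA : ∀ k, A *ᵥ u k = w k • u (k + 1)) (k : ℕ) :
    (A ^ m) *ᵥ u k = (∏ i ∈ Finset.range m, w i) • u k := by
  rw [pow_mulVec_of_mulVec_eq_smul A hA, hw.prod_range_add, hu]

end Matrix

theorem prod_range_natCast_sub {R : Type*} [CommRing R] (N : ℕ) :
    ∏ i ∈ Finset.range N, ((i : R) - N) = (-1) ^ N * (N.factorial : R) := by
  have hterm : ∀ j ∈ Finset.range N, ((N - 1 - j : ℕ) : R) - N = -((j + 1 : ℕ) : R) := by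
    intro j hj
    have hj : j < N := Finset.mem_range.mp hj
    rw [Nat.cast_sub (by omega : j ≤ N - 1), Nat.cast_sub (by omega : 1 ≤ N)]
    push_cast
    ring
  rw [← Finset.prod_range_reflect, Finset.prod_congr rfl hterm, Finset.prod_neg,
    Finset.card_range, ← Nat.cast_prod, Finset.prod_range_add_one_eq_factorial]

/-- The `m`-th standard basis vector of `ℂⁿ`, indexed by `ℕ`: it is `0` for `n ≤ m`, which lets
the column formulas below hold without range conditions. -/
def stdVec (n m : ℕ) : Fin n → ℂ := fun i => if (i : ℕ) = m then 1 else 0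

section

variable {n : ℕ}

lemma SimConj.isNilpotent_snd {P Q : Mat n × Mat n} (h : SimConj P Q)
    (hP : IsNilpotent P.2) : IsNilpotent Q.2 := by
  obtain ⟨A, -, hQ⟩ := h
  rw [hQ, ← conjAlgHom_apply]
  exact hP.map (conjAlgHom A)

lemma stdVec_val (j : Fin n) : stdVec n j = Pi.single j 1 := by
  ext i
  simp [stdVec, Pi.single_apply, Fin.val_inj]

lemma stdVec_of_le {m : ℕ} (hm : n ≤ m) : stdVec n m = 0 := by
  ext i
  simp only [stdVec, Pi.zero_apply, ite_eq_right_iff, one_ne_zero]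
  omega

lemma mulVec_stdVec_apply (A : Mat n) {m : ℕ} (hm : m < n) (i : Fin n) :
    (A *ᵥ stdVec n m) i = A i ⟨m, hm⟩ := by
  have h := stdVec_val ⟨m, hm⟩
  rw [Fin.val_mk] at h
  rw [h, mulVec_single_one]
  rfl

lemma trace_eq_sum_mulVec_stdVec (A : Mat n) : A.trace = ∑ i : Fin n, (A *ᵥ stdVec n i) i := by
  simp only [mulVec_stdVec_apply _ (Fin.isLt _), Fin.eta]
  rfl

lemma subd_mulVec_stdVec (a : ℕ → ℂ) (m : ℕ) :
    subd n a *ᵥ stdVec n m = a (m + 1) • stdVec n (m + 1) := by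
  rcases lt_or_ge m n with hm | hm
  · ext i
    simp only [mulVec_stdVec_apply _ hm, subd, of_apply, Pi.smul_apply, stdVec, smul_eq_mul]
    split_ifs <;> simp_all
  · rw [stdVec_of_le hm, stdVec_of_le (by omega), mulVec_zero, smul_zero]

lemma Y0_mulVec_stdVec {m : ℕ} (hm : m < n) :
    Y0 n *ᵥ stdVec n m = if m = 0 then 0 else stdVec n (m - 1) := by
  ext i
  rw [mulVec_stdVec_apply _ hm, apply_ite (fun v : Fin n → ℂ => v i)]
  simp only [Y0, of_apply, stdVec, Pi.zero_apply]
  split_ifs <;> first | rfl | omega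

lemma Y0_pow_mulVec_stdVec (k : ℕ) {m : ℕ} (hm : m < n) :
    Y0 n ^ k *ᵥ stdVec n m = if k ≤ m then stdVec n (m - k) else 0 := by
  induction k generalizing m with
  | zero => simp
  | succ k ih =>
    rw [pow_succ, ← mulVec_mulVec, Y0_mulVec_stdVec hm]
    split_ifs with hm0 hkm
    · omega
    · exact mulVec_zero _
    · rw [ih (by omega), if_pos (by omega), Nat.sub_sub, add_comm]
    · rw [ih (by omega), if_neg (by omega)]

lemma Y0_pow_self : Y0 n ^ n = 0 := by
  refine ext_of_mulVec_single fun j => ?_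
  rw [← stdVec_val, Y0_pow_mulVec_stdVec _ j.isLt, if_neg (by omega), zero_mulVec]

lemma trace_Y0_pow {k : ℕ} (hk : k ≠ 0) : (Y0 n ^ k).trace = 0 := by
  rw [trace_eq_sum_mulVec_stdVec]
  refine Finset.sum_eq_zero fun i _ => ?_
  rw [Y0_pow_mulVec_stdVec _ i.isLt]
  split_ifs
  · simp only [stdVec, ite_eq_right_iff, one_ne_zero]
    omega
  · rfl

lemma trace_subd_mul_subd (a b : ℕ → ℂ) : (subd n a * subd n b).trace = 0 := by
  rw [trace_eq_sum_mulVec_stdVec]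
  refine Finset.sum_eq_zero fun i _ => ?_
  simp only [← mulVec_mulVec, subd_mulVec_stdVec, mulVec_smul, Pi.smul_apply, stdVec, smul_eq_mul,
    mul_ite, mul_one, mul_zero, ite_eq_right_iff, mul_eq_zero]
  omega

lemma trace_subd_mul_Y0_pow (a : ℕ → ℂ) (k : ℕ) :
    (subd n a * Y0 n ^ k).trace = if k = 1 then ∑ i ∈ Finset.Ico 1 n, a i else 0 := by
  have hdiag : ∀ i : Fin n, ((subd n a * Y0 n ^ k) *ᵥ stdVec n i) i
      = if k = 1 ∧ 1 ≤ (i : ℕ) then a i else 0 := by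
    intro i
    rw [← mulVec_mulVec, Y0_pow_mulVec_stdVec _ i.isLt]
    split_ifs with hki h1 h1
    · obtain ⟨rfl, hi⟩ := h1
      simp only [subd_mulVec_stdVec, Pi.smul_apply, stdVec, smul_eq_mul,
        Nat.sub_add_cancel hi, if_true, mul_one]
    · simp only [subd_mulVec_stdVec, Pi.smul_apply, stdVec, smul_eq_mul]
      rw [if_neg (by omega), mul_zero]
    · omega
    · rw [mulVec_zero]
      rfl
  rw [trace_eq_sum_mulVec_stdVec, Finset.sum_congr rfl fun i _ => hdiag i]
  split_ifs with hk
  · simp only [hk, true_and]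
    rw [Fin.sum_univ_eq_sum_range (fun i => if 1 ≤ i then a i else 0), ← Finset.sum_filter]
    congr 1
    ext i
    simp only [Finset.mem_filter, Finset.mem_range, Finset.mem_Ico]
    omega
  · simp [hk]

lemma trace_sq_Y0_sub_smul (a : ℕ → ℂ) (s : ℂ) {k : ℕ} (hk : k ≠ 0) :
    ((Y0 n - s • (subd n a + Y0 n ^ k)) ^ 2).trace
      = -2 * s * (1 - if k = 1 then s else 0) * ∑ i ∈ Finset.Ico 1 n, a i := by
  have hXY : (subd n a * Y0 n).trace = ∑ i ∈ Finset.Ico 1 n, a i := by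
    simpa using trace_subd_mul_Y0_pow (n := n) a 1
  simp only [sq, sub_mul, mul_sub, add_mul, mul_add, smul_mul, mul_smul_comm, smul_add, trace_sub,
    trace_add, trace_smul]
  rw [trace_mul_comm (Y0 n) (subd n a), trace_mul_comm (Y0 n ^ k) (subd n a), ← sq, ← pow_succ,
    ← pow_succ', ← pow_add, trace_subd_mul_subd, trace_subd_mul_Y0_pow, hXY,
    trace_Y0_pow two_ne_zero, trace_Y0_pow (Nat.succ_ne_zero k), trace_Y0_pow (by omega)]
  simp only [smul_eq_mul]
  split_ifs <;> ring

def Mp (n : ℕ) : Mat n := subd n (avec n 1) + Y0 n ^ (n - 2)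

lemma sum_avec_one_ne_zero (hn : 2 ≤ n) : ∑ i ∈ Finset.Ico 1 n, avec n 1 i ≠ 0 := by
  have hcast : ∀ i ∈ Finset.Ico 1 n, avec n 1 i = (((i : ℤ) - n : ℤ) : ℂ) := by
    intro i hi
    have hi := (Finset.mem_Ico.mp hi).1
    rw [avec, if_neg (by omega)]
    push_cast
    rfl
  rw [Finset.sum_congr rfl hcast, ← Int.cast_sum, Int.cast_ne_zero]
  refine (Finset.sum_neg (fun i hi => ?_) ⟨1, Finset.mem_Ico.mpr ⟨le_rfl, by omega⟩⟩).ne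
  have hi := Finset.mem_Ico.mp hi
  omega

lemma not_isNilpotent_Y0_sub_smul_Mp (hn : 3 ≤ n) {s : ℂ} (hs : s ≠ 0) (hs1 : n = 3 → s ≠ 1) :
    ¬ IsNilpotent (Y0 n - s • Mp n) := by
  intro h
  have htrace := (isNilpotent_trace_of_isNilpotent (h.pow_succ 1)).eq_zero
  rw [Mp, trace_sq_Y0_sub_smul _ _ (by omega)] at htrace
  refine mul_ne_zero (mul_ne_zero (mul_ne_zero (by norm_num) hs) ?_)
    (sum_avec_one_ne_zero (by omega)) htrace
  split_ifs with h3
  · exact sub_ne_zero.mpr (hs1 (by omega)).symm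
  · simp

lemma Mp_mulVec_stdVec_of_lt {j : ℕ} (hj : j + 2 < n) :
    Mp n *ᵥ stdVec n j = ((j : ℂ) + 1 - n) • stdVec n (j + 1) := by
  rw [Mp, add_mulVec, subd_mulVec_stdVec, Y0_pow_mulVec_stdVec _ (by omega), if_neg (by omega),
    add_zero, avec, if_neg (by omega), Nat.cast_succ]

lemma Mp_mulVec_stdVec_sub_two (hn : 2 ≤ n) :
    Mp n *ᵥ stdVec n (n - 2) = stdVec n 0 - stdVec n (n - 1) := by
  rw [Mp, add_mulVec, subd_mulVec_stdVec, Y0_pow_mulVec_stdVec _ (by omega), if_pos le_rfl,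
    avec, if_neg (by omega), Nat.sub_self, show n - 2 + 1 = n - 1 by omega,
    Nat.cast_sub (by omega : 1 ≤ n)]
  module

lemma Mp_mulVec_stdVec_sub_one (hn : 2 ≤ n) : Mp n *ᵥ stdVec n (n - 1) = stdVec n 1 := by
  rw [Mp, add_mulVec, subd_mulVec_stdVec, Y0_pow_mulVec_stdVec _ (by omega), if_pos (by omega),
    show n - 1 + 1 = n by omega, stdVec_of_le le_rfl, smul_zero, zero_add,
    show n - 1 - (n - 2) = 1 by omega]

def cycVec (n k : ℕ) : Fin n → ℂ :=
  if k % (n - 1) = 0 then stdVec n (n - 1) - stdVec n 0 else stdVec n (k % (n - 1))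

def cycWeight (n k : ℕ) : ℂ :=
  if k % (n - 1) = 0 then n else ((k % (n - 1) : ℕ) : ℂ) + 1 - n

lemma cycVec_periodic : Function.Periodic (cycVec n) (n - 1) := fun k => by
  simp only [cycVec, Nat.add_mod_right]

lemma cycWeight_periodic : Function.Periodic (cycWeight n) (n - 1) := fun k => by
  simp only [cycWeight, Nat.add_mod_right]

lemma Mp_mulVec_cycVec (hn : 3 ≤ n) (k : ℕ) :
    Mp n *ᵥ cycVec n k = cycWeight n k • cycVec n (k + 1) := by
  have hr : k % (n - 1) < n - 1 := Nat.mod_lt _ (by omega)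
  have hsucc : (k + 1) % (n - 1) = (k % (n - 1) + 1) % (n - 1) := by
    rw [Nat.add_mod, Nat.mod_eq_of_lt (show 1 < n - 1 by omega)]
  unfold cycVec cycWeight
  rw [hsucc]
  by_cases h0 : k % (n - 1) = 0
  · rw [if_pos h0, if_pos h0, h0, zero_add, Nat.mod_eq_of_lt (show 1 < n - 1 by omega),
      if_neg one_ne_zero, mulVec_sub, Mp_mulVec_stdVec_sub_one (by omega),
      Mp_mulVec_stdVec_of_lt (j := 0) (by omega)]
    module
  rw [if_neg h0, if_neg h0]
  by_cases hlast : k % (n - 1) = n - 2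
  · rw [hlast, Mp_mulVec_stdVec_sub_two (by omega), show n - 2 + 1 = n - 1 by omega, Nat.mod_self,
      if_pos rfl, Nat.cast_sub (by omega : 2 ≤ n)]
    module
  · rw [Mp_mulVec_stdVec_of_lt (by omega), Nat.mod_eq_of_lt (by omega : k % (n - 1) + 1 < n - 1),
      if_neg (by omega)]

lemma prod_cycWeight (hn : 3 ≤ n) (hodd : Odd n) :
    ∏ i ∈ Finset.range (n - 1), cycWeight n i
      = -(((n - 1).factorial : ℂ) + ((n - 2).factorial : ℂ)) := by
  have hweight : ∀ i ∈ Finset.range (n - 2), cycWeight n (i + 1) = (i : ℂ) - (n - 2 : ℕ) := by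
    intro i hi
    have hi : i + 1 < n - 1 := by have := Finset.mem_range.mp hi; omega
    rw [cycWeight, Nat.mod_eq_of_lt hi, if_neg (by omega), Nat.cast_sub (by omega)]
    push_cast
    ring
  have hsign : ((-1 : ℂ)) ^ (n - 2) = -1 :=
    Odd.neg_one_pow (by obtain ⟨m, rfl⟩ := hodd; exact ⟨m - 1, by omega⟩)
  have hfact : (n - 1).factorial = (n - 1) * (n - 2).factorial := by
    rw [← Nat.mul_factorial_pred (by omega : n - 1 ≠ 0), Nat.sub_sub]
  rw [show n - 1 = n - 2 + 1 by omega, Finset.prod_range_succ', Finset.prod_congr rfl hweight,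
    prod_range_natCast_sub, hsign, show n - 2 + 1 = n - 1 by omega, hfact, cycWeight,
    if_pos (Nat.zero_mod _)]
  push_cast [Nat.cast_sub (by omega : 1 ≤ n)]
  ring

lemma Mp_pow_sub_one_mulVec_cycVec (hn : 3 ≤ n) (hodd : Odd n) (k : ℕ) :
    Mp n ^ (n - 1) *ᵥ cycVec n k
      = (-(((n - 1).factorial : ℂ) + ((n - 2).factorial : ℂ))) • cycVec n k := by
  rw [pow_period_mulVec _ cycVec_periodic cycWeight_periodic (Mp_mulVec_cycVec hn),
    prod_cycWeight hn hodd]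

lemma exists_Mp_mulVec_stdVec_eq_smul_cycVec (hn : 3 ≤ n) {j : ℕ} (hj : j < n) :
    ∃ (c : ℂ) (k : ℕ), Mp n *ᵥ stdVec n j = c • cycVec n k := by
  have hcyc : ∀ {m : ℕ}, 1 ≤ m → m ≤ n - 2 → cycVec n m = stdVec n m := fun h1 h2 => by
    rw [cycVec, Nat.mod_eq_of_lt (by omega), if_neg (by omega)]
  rcases (by omega : j + 2 < n ∨ j = n - 2 ∨ j = n - 1) with hj | rfl | rfl
  · exact ⟨_, j + 1, by rw [Mp_mulVec_stdVec_of_lt hj, hcyc (by omega) (by omega)]⟩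
  · refine ⟨-1, 0, ?_⟩
    rw [Mp_mulVec_stdVec_sub_two (by omega), cycVec, if_pos (Nat.zero_mod _)]
    module
  · exact ⟨1, 1, by rw [Mp_mulVec_stdVec_sub_one (by omega), one_smul, hcyc le_rfl (by omega)]⟩

lemma Mp_pow_self (hn : 3 ≤ n) (hodd : Odd n) :
    Mp n ^ n = (-(((n - 1).factorial : ℂ) + ((n - 2).factorial : ℂ))) • Mp n := by
  refine ext_of_mulVec_single fun j => ?_
  obtain ⟨c, k, hc⟩ := exists_Mp_mulVec_stdVec_eq_smul_cycVec hn j.isLt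
  have hsplit : Mp n ^ n = Mp n ^ (n - 1) * Mp n := by
    rw [← pow_succ, Nat.sub_add_cancel (by omega)]
  rw [← stdVec_val, hsplit, ← mulVec_mulVec, hc, mulVec_smul, Mp_pow_sub_one_mulVec_cycVec hn hodd,
    smul_mulVec, hc, smul_comm]

end

/-- The odd case: with `α = (n-1)! + (n-2)!`, `χ(t) = tⁿ - α t` and `p(t) = t^{n-2}`, one has
`χ(X₁ + Y₀^{n-2}) = -2α (X₁ + Y₀^{n-2})`, the matrix `Y₀ - 2α(X₁ + Y₀^{n-2})` is not
nilpotent, and `Φ_{-p}Ψ_χΦ_p` does not fix the conjugacy class of `(X₁, Y₀)`. -/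
theorem odd_case_not_fixed (n : ℕ) (hn : 3 ≤ n) (hodd : Odd n) :
    aeval (subd n (avec n 1) + Y0 n ^ (n - 2))
        (Polynomial.X ^ n -
          Polynomial.C ((Nat.factorial (n - 1) : ℂ) + (Nat.factorial (n - 2) : ℂ)) *
            Polynomial.X) =
      (-(2 * ((Nat.factorial (n - 1) : ℂ) + (Nat.factorial (n - 2) : ℂ)))) •
        (subd n (avec n 1) + Y0 n ^ (n - 2)) ∧
    ¬ IsNilpotent (Y0 n -
        (2 * ((Nat.factorial (n - 1) : ℂ) + (Nat.factorial (n - 2) : ℂ))) •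
          (subd n (avec n 1) + Y0 n ^ (n - 2))) ∧
    ¬ SimConj (subd n (avec n 1), Y0 n)
        (phiPair (-(Polynomial.X ^ (n - 2)))
          (psiPair
            (Polynomial.X ^ n -
              Polynomial.C ((Nat.factorial (n - 1) : ℂ) + (Nat.factorial (n - 2) : ℂ)) *
                Polynomial.X)
            (phiPair (Polynomial.X ^ (n - 2)) (subd n (avec n 1), Y0 n)))) := by
  set α : ℂ := (n - 1).factorial + (n - 2).factorial
  have hα : 2 * α ≠ 0 := by
    simp only [α]
    norm_cast
    positivity
  have hχ : aeval (Mp n) (X ^ n - C α * X) = (-(2 * α)) • Mp n := by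
    rw [map_sub, map_mul, aeval_X_pow, aeval_C, aeval_X, Mp_pow_self hn hodd,
      ← Algebra.smul_def, ← sub_smul]
    congr 1
    ring
  have hY : ¬ IsNilpotent (Y0 n - (2 * α) • Mp n) := by
    refine not_isNilpotent_Y0_sub_smul_Mp hn hα fun h3 => ?_
    subst h3
    norm_num [α, Nat.factorial]
  refine ⟨hχ, hY, fun h => hY ?_⟩
  have hsnd := h.isNilpotent_snd ⟨n, Y0_pow_self⟩
  simp only [phiPair, psiPair, aeval_X_pow] at hsnd
  rwa [show subd n (avec n 1) + Y0 n ^ (n - 2) = Mp n from rfl, hχ, neg_smul,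
    ← sub_eq_add_neg] at hsnd

end
end
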